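/- Let P ⊆ ℝ^n be a nonempty compact set and I ⊆ {1,…,n}. Suppose there exists a finite set Q ⊆ ℝ^n such that sup_{x∈P} f(x) = sup_{x∈Q} f(x) for every function f : ℝ^n → ℝ that is convex in x_I. Then P admits a rectangular decomposition with respect to I. -/

import Mathlib

set_option maxHeartbeats 1600000


open Set

/-- `f : ℝⁿ → ℝ` is *convex in the coordinates `I`*: for every fixed assignment `xb` of the
coordinates outside `I`, the restriction of `f` to the corresponding affine slice is convex. -/
def ConvexIn {n : ℕ} (I : Set (Fin n)) (f : (Fin n → ℝ) → ℝ) : Prop :=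
  ∀ xb : Fin n → ℝ, ConvexOn ℝ {x : Fin n → ℝ | ∀ i ∉ I, x i = xb i} f

/-- `exPts S` is the set `X(S)` of extreme points of the convex hull of `S`. -/
def exPts {n : ℕ} (S : Set (Fin n → ℝ)) : Set (Fin n → ℝ) :=
  (convexHull ℝ S).extremePoints ℝ

/-- A compact set `P ⊆ ℝⁿ` *admits a rectangular decomposition* with respect to `I` if there
are a finite index set `J` and compact sets `Pj j` such that (i) each `Pj j` has every
coordinate outside `I` fixed, (ii) `⋃ⱼ X(Pj j) ⊆ P ⊆ ⋃ⱼ Pj j`, and (iii) each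
`conv (Pj j)` is the convex hull of a finite union of hyper-rectangles. -/
def AdmitsRectDecomp {n : ℕ} (P : Set (Fin n → ℝ)) (I : Set (Fin n)) : Prop :=
  ∃ (J : Type) (_ : Finite J) (Pj : J → Set (Fin n → ℝ)),
    (∀ j, IsCompact (Pj j)) ∧
    (∀ j, ∀ i ∉ I, ∃ c : ℝ, ∀ x ∈ Pj j, x i = c) ∧
    (⋃ j, exPts (Pj j)) ⊆ P ∧ P ⊆ (⋃ j, Pj j) ∧
    (∀ j, ∃ (K : Type) (_ : Finite K) (l u : K → Fin n → ℝ),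
      (∀ k, l k ≤ u k) ∧
      convexHull ℝ (Pj j) = convexHull ℝ (⋃ k, Icc (l k) (u k)))

/-- The convex hull of a compact subset of `ℝⁿ` is compact (via Carathéodory). -/
lemma isCompact_convexHull_of_isCompact {n : ℕ} {s : Set (Fin n → ℝ)} (hs : IsCompact s) :
    IsCompact (convexHull ℝ s) := by
  classical
  rcases s.eq_empty_or_nonempty with rfl | hsne
  · simp
  set ι := Fin (n + 1)
  set D : Set ((ι → ℝ) × (ι → (Fin n → ℝ))) :=
    (stdSimplex ℝ ι) ×ˢ (univ.pi fun _ : ι => s) with hDdef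
  set φ : ((ι → ℝ) × (ι → (Fin n → ℝ))) → (Fin n → ℝ) := fun p => ∑ i, p.1 i • p.2 i with hφdef
  have hcont : Continuous φ := by
    apply continuous_finset_sum
    intro i _
    exact ((continuous_apply i).comp continuous_fst).smul
      ((continuous_apply i).comp continuous_snd)
  have hD : IsCompact D :=
    (isCompact_stdSimplex ℝ ι).prod (isCompact_univ_pi fun _ => hs)
  have himg : convexHull ℝ s = φ '' D := by
    apply Subset.antisymm
    · intro x hx
      obtain ⟨κ, hκfin, z, w, hzs, hai, hw0, hw1, hsum⟩ :=
        eq_pos_convex_span_of_mem_convexHull hx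
      have hκne : Nonempty κ := by
        by_contra h
        have : IsEmpty κ := not_nonempty_iff.mp h
        rw [Finset.univ_eq_empty, Finset.sum_empty] at hw1
        exact absurd hw1 (by norm_num)
      have hcard : Fintype.card κ ≤ n + 1 := by
        calc Fintype.card κ ≤ Module.finrank ℝ (vectorSpan ℝ (Set.range z)) + 1 :=
              hai.card_le_finrank_succ
          _ ≤ Module.finrank ℝ (Fin n → ℝ) + 1 := by
              gcongr
              exact Submodule.finrank_le _
          _ = n + 1 := by rw [Module.finrank_fin_fun]
      obtain ⟨j⟩ : Nonempty (κ ↪ ι) :=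
        Function.Embedding.nonempty_of_card_le (by simpa [ι] using hcard)
      set w' : ι → ℝ := fun i => if h : ∃ a, j a = i then w h.choose else 0 with hw'def
      set z' : ι → (Fin n → ℝ) :=
        fun i => if h : ∃ a, j a = i then z h.choose else z (Classical.arbitrary κ) with hz'def
      have key : ∀ (g : κ → Fin n → ℝ),
          (∑ i, if h : ∃ a, j a = i then g h.choose else 0) = ∑ a, g a := by
        intro g
        have h1 : ∑ i ∈ Finset.univ.map j, (if h : ∃ a, j a = i then g h.choose else 0)
            = ∑ a, g a := by
          rw [Finset.sum_map]
          refine Finset.sum_congr rfl fun a _ => ?_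
          have hex : ∃ a', j a' = j a := ⟨a, rfl⟩
          rw [dif_pos hex]
          exact congrArg g (j.injective hex.choose_spec)
        rw [← h1]
        symm
        apply Finset.sum_subset (Finset.subset_univ _)
        intro i _ hi
        rw [dif_neg]
        intro ⟨a, ha⟩
        exact hi (Finset.mem_map.mpr ⟨a, Finset.mem_univ a, ha⟩)
      have keyR : ∀ (g : κ → ℝ),
          (∑ i, if h : ∃ a, j a = i then g h.choose else 0) = ∑ a, g a := by
        intro g
        have h1 : ∑ i ∈ Finset.univ.map j, (if h : ∃ a, j a = i then g h.choose else 0)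
            = ∑ a, g a := by
          rw [Finset.sum_map]
          refine Finset.sum_congr rfl fun a _ => ?_
          have hex : ∃ a', j a' = j a := ⟨a, rfl⟩
          rw [dif_pos hex]
          exact congrArg g (j.injective hex.choose_spec)
        rw [← h1]
        symm
        apply Finset.sum_subset (Finset.subset_univ _)
        intro i _ hi
        rw [dif_neg]
        intro ⟨a, ha⟩
        exact hi (Finset.mem_map.mpr ⟨a, Finset.mem_univ a, ha⟩)
      refine ⟨(w', z'), ⟨⟨?_, ?_⟩, ?_⟩, ?_⟩
      · intro i
        simp only [hw'def]
        split_ifs with h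
        · exact (hw0 _).le
        · exact le_refl 0
      · simpa only [hw'def] using (keyR w).trans hw1
      · intro i _
        simp only [hz'def]
        split_ifs with h
        · exact hzs ⟨_, rfl⟩
        · exact hzs ⟨_, rfl⟩
      · show ∑ i, w' i • z' i = x
        have hterm : ∀ i, w' i • z' i =
            (if h : ∃ a, j a = i then w h.choose • z h.choose else 0) := by
          intro i
          by_cases h : ∃ a, j a = i
          · simp only [hw'def, hz'def]
            rw [dif_pos h, dif_pos h, dif_pos h]
          · simp only [hw'def, hz'def]
            rw [dif_neg h, dif_neg h, dif_neg h, zero_smul]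
        calc ∑ i, w' i • z' i
            = ∑ i, (if h : ∃ a, j a = i then w h.choose • z h.choose else 0) := by
              exact Finset.sum_congr rfl fun i _ => hterm i
          _ = ∑ a, w a • z a := key (fun a => w a • z a)
          _ = x := hsum
    · rintro x ⟨⟨w, z⟩, ⟨⟨hw0, hw1⟩, hz⟩, rfl⟩
      exact mem_convexHull_of_exists_fintype w z hw0 hw1
        (fun i => hz i (mem_univ i)) rfl
  rw [himg]
  exact hD.image hcont

/-- Proposition 1 (partial converse of Theorem 1): if a nonempty compact set `P ⊆ ℝⁿ`
shares its supremum with a finite set `Q` for every function convex in `x_I`, then `P`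
admits a rectangular decomposition with respect to `I`. -/
theorem stmt_4 {n : ℕ} (P : Set (Fin n → ℝ)) (hPne : P.Nonempty) (hPcomp : IsCompact P)
    (I : Set (Fin n)) (Q : Set (Fin n → ℝ)) (hQfin : Q.Finite)
    (hsup : ∀ f : (Fin n → ℝ) → ℝ, ConvexIn I f → sSup (f '' P) = sSup (f '' Q)) :
    AdmitsRectDecomp P I := by
  classical
  set slc : (Fin n → ℝ) → Set (Fin n → ℝ) := fun z => {x | ∀ i ∉ I, x i = z i} with hslc
  have hslc_cvx : ∀ z, Convex ℝ (slc z) := by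
    intro z x hx y hy a b ha hb hab i hi
    have hx' := hx i hi
    have hy' := hy i hi
    simp only [Pi.add_apply, Pi.smul_apply, smul_eq_mul] at *
    rw [hx', hy', ← add_mul, hab, one_mul]
  have hslc_closed : ∀ z, IsClosed (slc z) := by
    intro z
    have : slc z = ⋂ i, ⋂ (_ : i ∉ I), {x : Fin n → ℝ | x i = z i} := by
      ext x; simp [hslc]
    rw [this]
    exact isClosed_iInter fun i => isClosed_iInter fun _ =>
      isClosed_eq (continuous_apply i) continuous_const
  have hmem : ∀ z xb x, x ∈ slc xb → (x ∈ slc z ↔ ∀ i ∉ I, xb i = z i) := by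
    intro z xb x hx
    constructor
    · intro h i hi; exact (hx i hi).symm.trans (h i hi)
    · intro h i hi; exact (hx i hi).trans (h i hi)
  -- functions that are affine on each slice are ConvexIn
  have haff : ∀ f : (Fin n → ℝ) → ℝ,
      (∀ xb, ∃ (L : (Fin n → ℝ) →L[ℝ] ℝ) (c : ℝ), ∀ x ∈ slc xb, f x = L x + c) →
      ConvexIn I f := by
    intro f hf xb
    obtain ⟨L, c, hLc⟩ := hf xb
    refine ⟨hslc_cvx xb, ?_⟩
    intro x hx y hy a b ha hb hab
    have hxy : a • x + b • y ∈ slc xb := hslc_cvx xb hx hy ha hb hab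
    rw [hLc _ hxy, hLc _ hx, hLc _ hy, map_add, map_smul, map_smul]
    simp only [smul_eq_mul]
    have hcc : a * c + b * c = c := by rw [← add_mul, hab, one_mul]
    linarith
  -- slice indicator functions
  have hind : ∀ z : Fin n → ℝ,
      ConvexIn I (fun x => if x ∈ slc z then (1 : ℝ) else 0) := by
    intro z
    apply haff
    intro xb
    by_cases hc : ∀ i ∉ I, xb i = z i
    · refine ⟨0, 1, fun x hx => ?_⟩
      show (if x ∈ slc z then (1 : ℝ) else 0) = (0 : (Fin n → ℝ) →L[ℝ] ℝ) x + 1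
      rw [if_pos ((hmem z xb x hx).mpr hc)]
      simp
    · refine ⟨0, 0, fun x hx => ?_⟩
      show (if x ∈ slc z then (1 : ℝ) else 0) = (0 : (Fin n → ℝ) →L[ℝ] ℝ) x + 0
      rw [if_neg (fun h => hc ((hmem z xb x hx).mp h))]
      simp
  have hself : ∀ z : Fin n → ℝ, z ∈ slc z := fun z i _ => rfl
  -- Step A : every point of P has a compatible point of Q
  have stepA : ∀ x ∈ P, ∃ q ∈ Q, x ∈ slc q := by
    intro x hx
    by_contra hno
    push_neg at hno
    set f : (Fin n → ℝ) → ℝ := fun y => if y ∈ slc x then 1 else 0 with hfdef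
    have h1 : (1 : ℝ) ∈ f '' P := ⟨x, hx, by simp [hfdef, hself x]⟩
    have hub : ∀ y ∈ f '' P, y ≤ 1 := by
      rintro _ ⟨p, _, rfl⟩
      simp only [hfdef]
      split_ifs <;> norm_num
    have hP1 : (1 : ℝ) ≤ sSup (f '' P) := le_csSup ⟨1, hub⟩ h1
    have hQ0 : sSup (f '' Q) ≤ 0 := by
      apply Real.sSup_le _ le_rfl
      rintro _ ⟨q, hq, rfl⟩
      have hqs : q ∉ slc x := fun h => hno q hq (fun i hi => (h i hi).symm)
      simp [hfdef, hqs]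
    have := hsup f (hind x)
    linarith
  -- Step A' : every point of Q has a compatible point of P
  have stepA' : ∀ q ∈ Q, (P ∩ slc q).Nonempty := by
    intro q hq
    by_contra hno
    rw [not_nonempty_iff_eq_empty] at hno
    set f : (Fin n → ℝ) → ℝ := fun y => if y ∈ slc q then 1 else 0 with hfdef
    have h1 : (1 : ℝ) ∈ f '' Q := ⟨q, hq, by simp [hfdef, hself q]⟩
    have hub : ∀ y ∈ f '' Q, y ≤ 1 := by
      rintro _ ⟨p, _, rfl⟩
      simp only [hfdef]
      split_ifs <;> norm_num
    have hQ1 : (1 : ℝ) ≤ sSup (f '' Q) := le_csSup ⟨1, hub⟩ h1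
    have hP0 : sSup (f '' P) ≤ 0 := by
      apply Real.sSup_le _ le_rfl
      rintro _ ⟨p, hp, rfl⟩
      have hps : p ∉ slc q := fun h => (eq_empty_iff_forall_notMem.mp hno p) ⟨hp, h⟩
      simp [hfdef, hps]
    have := hsup f (hind q)
    linarith
  -- Step B : support functions of P ∩ slc q and Q ∩ slc q agree
  have stepB : ∀ q ∈ Q, ∀ L : (Fin n → ℝ) →L[ℝ] ℝ,
      sSup (L '' (P ∩ slc q)) = sSup (L '' (Q ∩ slc q)) := by
    intro q hq L
    obtain ⟨c, hc⟩ : BddBelow (L '' (P ∪ Q)) :=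
      ((hPcomp.union hQfin.isCompact).image L.continuous).bddBelow
    have hPq : IsCompact (P ∩ slc q) := hPcomp.inter_right (hslc_closed q)
    have hQq : (Q ∩ slc q).Finite := hQfin.inter_of_left _
    have hPqne : (P ∩ slc q).Nonempty := stepA' q hq
    have hQqne : (Q ∩ slc q).Nonempty := ⟨q, hq, hself q⟩
    have hbP : BddAbove (L '' (P ∩ slc q)) := (hPq.image L.continuous).bddAbove
    have hbQ : BddAbove (L '' (Q ∩ slc q)) := (hQq.image L).bddAbove
    set f : (Fin n → ℝ) → ℝ := fun y => if y ∈ slc q then L y else c with hfdef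
    have hfc : ConvexIn I f := by
      apply haff
      intro xb
      by_cases hcmp : ∀ i ∉ I, xb i = q i
      · refine ⟨L, 0, fun x hx => ?_⟩
        show (if x ∈ slc q then L x else c) = L x + 0
        rw [if_pos ((hmem q xb x hx).mpr hcmp)]
        ring
      · refine ⟨0, c, fun x hx => ?_⟩
        show (if x ∈ slc q then L x else c) = (0 : (Fin n → ℝ) →L[ℝ] ℝ) x + c
        rw [if_neg (fun h => hcmp ((hmem q xb x hx).mp h))]
        simp
    have hgen : ∀ (S : Set (Fin n → ℝ)), S.Nonempty → (S ∩ slc q).Nonempty →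
        BddAbove (L '' (S ∩ slc q)) → S ⊆ P ∪ Q →
        sSup (f '' S) = sSup (L '' (S ∩ slc q)) := by
      intro S hSne hSqne hbS hSsub
      obtain ⟨p₀, hp₀⟩ := hSqne
      apply le_antisymm
      · apply csSup_le (hSne.image f)
        rintro _ ⟨p, hp, rfl⟩
        by_cases h : p ∈ slc q
        · have : f p = L p := if_pos h
          rw [this]
          exact le_csSup hbS ⟨p, ⟨hp, h⟩, rfl⟩
        · have : f p = c := if_neg h
          rw [this]
          calc c ≤ L p₀ := hc ⟨p₀, hSsub hp₀.1, rfl⟩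
            _ ≤ sSup (L '' (S ∩ slc q)) := le_csSup hbS ⟨p₀, hp₀, rfl⟩
      · have hne2 : ((L : (Fin n → ℝ) → ℝ) '' (S ∩ slc q)).Nonempty := ⟨L p₀, ⟨p₀, hp₀, rfl⟩⟩
        apply csSup_le hne2
        rintro _ ⟨p, hp, rfl⟩
        have : L p = f p := (if_pos hp.2).symm
        rw [this]
        have hbf : BddAbove (f '' S) := by
          have hsub : f '' S ⊆ (L '' (S ∩ slc q)) ∪ {c} := by
            rintro _ ⟨y, hy, rfl⟩
            by_cases h : y ∈ slc q
            · exact Or.inl ⟨y, ⟨hy, h⟩, (if_pos h).symm⟩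
            · exact Or.inr (by simp [hfdef, h])
          exact (hbS.union (bddAbove_singleton)).mono hsub
        exact le_csSup hbf ⟨p, hp.1, rfl⟩
    have hgP : sSup (f '' P) = sSup (L '' (P ∩ slc q)) :=
      hgen P hPne hPqne hbP subset_union_left
    have hgQ : sSup (f '' Q) = sSup (L '' (Q ∩ slc q)) :=
      hgen Q ⟨q, hq⟩ hQqne hbQ subset_union_right
    rw [← hgP, ← hgQ]
    exact hsup f hfc
  -- Step C : equal convex hulls
  have stepC : ∀ q ∈ Q,
      convexHull ℝ (P ∩ slc q) = convexHull ℝ (Q ∩ slc q) := by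
    intro q hq
    have hPq : IsCompact (P ∩ slc q) := hPcomp.inter_right (hslc_closed q)
    have hQq : (Q ∩ slc q).Finite := hQfin.inter_of_left _
    have hPqne : (P ∩ slc q).Nonempty := stepA' q hq
    have hQqne : (Q ∩ slc q).Nonempty := ⟨q, hq, hself q⟩
    have hPhull : IsCompact (convexHull ℝ (P ∩ slc q)) := isCompact_convexHull_of_isCompact hPq
    apply Subset.antisymm
    · apply convexHull_min _ (convex_convexHull ℝ _)
      intro p hp
      by_contra hout
      obtain ⟨L, u, hLa, hLu⟩ := geometric_hahn_banach_closed_point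
        (convex_convexHull ℝ _) (hQq.isClosed_convexHull ℝ) hout
      have h1 : sSup (L '' (Q ∩ slc q)) ≤ u := by
        apply csSup_le (hQqne.image L)
        rintro _ ⟨y, hy, rfl⟩
        exact (hLa y (subset_convexHull ℝ _ hy)).le
      have h2 : L p ≤ sSup (L '' (P ∩ slc q)) :=
        le_csSup (hPq.image L.continuous).bddAbove ⟨p, hp, rfl⟩
      have h3 := stepB q hq L
      linarith
    · apply convexHull_min _ (convex_convexHull ℝ _)
      intro y hy
      by_contra hout
      obtain ⟨L, u, hLa, hLu⟩ := geometric_hahn_banach_closed_point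
        (convex_convexHull ℝ _) hPhull.isClosed hout
      have h1 : sSup (L '' (P ∩ slc q)) ≤ u := by
        apply csSup_le (hPqne.image L)
        rintro _ ⟨p, hp, rfl⟩
        exact (hLa p (subset_convexHull ℝ _ hp)).le
      have h2 : L y ≤ sSup (L '' (Q ∩ slc q)) :=
        le_csSup ((hQfin.inter_of_left _).image L).bddAbove ⟨y, hy, rfl⟩
      have h3 := stepB q hq L
      linarith
  -- Assemble the decomposition
  refine ⟨↥Q, hQfin.to_subtype, fun q => P ∩ slc (q : Fin n → ℝ), ?_, ?_, ?_, ?_, ?_⟩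
  · exact fun q => hPcomp.inter_right (hslc_closed _)
  · exact fun q i hi => ⟨(q : Fin n → ℝ) i, fun x hx => hx.2 i hi⟩
  · apply iUnion_subset
    intro q x hx
    exact (extremePoints_convexHull_subset hx).1
  · intro x hx
    obtain ⟨q, hq, hqs⟩ := stepA x hx
    exact mem_iUnion.mpr ⟨⟨q, hq⟩, hx, hqs⟩
  · intro q
    refine ⟨↥(Q ∩ slc (q : Fin n → ℝ)), (hQfin.inter_of_left _).to_subtype,
      fun k => (k : Fin n → ℝ), fun k => (k : Fin n → ℝ), fun k => le_refl _, ?_⟩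
    have hU : (⋃ k : ↥(Q ∩ slc (q : Fin n → ℝ)), Icc (k : Fin n → ℝ) (k : Fin n → ℝ))
        = Q ∩ slc (q : Fin n → ℝ) := by
      ext y
      simp only [mem_iUnion, Icc_self, mem_singleton_iff, Subtype.exists, exists_prop]
      constructor
      · rintro ⟨a, ha, rfl⟩; exact ha
      · intro hy; exact ⟨y, hy, rfl⟩
    rw [hU]
    exact stepC q q.2
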